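/- Let x be a diagonal matrix in SL(3,ℂ) of finite order divisible by 3. Then the scalar matrix ω₃·1 belongs to the subgroup of SL(3,ℂ) generated by T and x. (Contrapositive form of the claim 'order3' and its consequence in the paper's Lemma on exact sequences of SL(3) subgroups.) -/

import Mathlib

open Matrix

noncomputable section

/-- The cyclic permutation matrix `T` as an element of `SL(3, ℂ)`. -/
def T3 : Matrix.SpecialLinearGroup (Fin 3) ℂ :=
  ⟨!![0, 1, 0; 0, 0, 1; 1, 0, 0], by rw [Matrix.det_fin_three]; simp⟩

/-- `ω₃ = e^{2πi/3}`, a primitive cube root of unity. -/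
def ω3 : ℂ := Complex.exp (2 * Real.pi * Complex.I / 3)

lemma ω3_pow_three : ω3 ^ 3 = 1 := by
  unfold ω3
  rw [← Complex.exp_nat_mul]
  rw [show ((3 : ℕ) : ℂ) * (2 * Real.pi * Complex.I / 3) = 2 * Real.pi * Complex.I by
    push_cast; ring]
  exact Complex.exp_two_pi_mul_I

/-- The scalar matrix `ω₃·1` as an element of `SL(3, ℂ)`. -/
def ω3SL : Matrix.SpecialLinearGroup (Fin 3) ℂ :=
  ⟨ω3 • (1 : Matrix (Fin 3) (Fin 3) ℂ), by
    simp [Matrix.det_smul, ω3_pow_three]⟩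


lemma ω3_ne_one : ω3 ≠ 1 := by
  unfold ω3
  intro h
  rw [Complex.exp_eq_one_iff] at h
  obtain ⟨k, hk⟩ := h
  have hπ : (Real.pi : ℂ) ≠ 0 := by exact_mod_cast Real.pi_ne_zero
  have h3 : (1 : ℂ) = 3 * k := by
    have hne : (2 * (Real.pi:ℂ) * Complex.I) ≠ 0 := by
      simp [Real.pi_ne_zero, Complex.I_ne_zero]
    apply mul_left_cancel₀ hne
    linear_combination 3 * hk
  have : (3 * k : ℤ) = 1 := by exact_mod_cast h3.symm
  omega

lemma cube_roots {a : ℂ} (h : a ^ 3 = 1) : a = 1 ∨ a = ω3 ∨ a = ω3 ^ 2 := by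
  have hω := ω3_pow_three
  have hs : ω3 ^ 2 + ω3 + 1 = 0 := by
    have h1 : (ω3 - 1) * (ω3 ^ 2 + ω3 + 1) = 0 := by linear_combination hω
    rcases mul_eq_zero.mp h1 with h2 | h2
    · exact absurd (by linear_combination h2) ω3_ne_one
    · exact h2
  by_cases h1 : a = 1
  · left; exact h1
  have hq : a ^ 2 + a + 1 = 0 := by
    have h2 : (a - 1) * (a ^ 2 + a + 1) = 0 := by linear_combination h
    rcases mul_eq_zero.mp h2 with h2 | h2
    · exact absurd (by linear_combination h2) h1
    · exact h2
  have h2 : (a - ω3) * (a - ω3 ^ 2) = 0 := by linear_combination hq - a * hs + hω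
  rcases mul_eq_zero.mp h2 with h2 | h2
  · right; left; linear_combination h2
  · right; right; linear_combination h2

lemma key_mat (a b c u : ℂ) (h1 : a * b ^ 2 = u) (h2 : b * c ^ 2 = u) (h3 : c * a ^ 2 = u) :
    Matrix.diagonal ![a, b, c] * !![0,1,0;0,0,1;1,0,0] * Matrix.diagonal ![a, b, c] *
      Matrix.diagonal ![a, b, c] * !![0,1,0;0,0,1;1,0,0] * !![0,1,0;0,0,1;1,0,0] =
      u • (1 : Matrix (Fin 3) (Fin 3) ℂ) := by
  ext i j
  fin_cases i <;> fin_cases j <;>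
    simp [Matrix.mul_apply, Fin.sum_univ_three, Matrix.diagonal, Matrix.one_apply,
      Matrix.vecHead, Matrix.vecTail, -mul_eq_zero] <;>
    first
      | linear_combination h1
      | linear_combination h2
      | linear_combination h3

/-- if `x ∈ SL(3,ℂ)` is diagonal of finite order divisible by `3`, then the
scalar matrix `ω₃·1` belongs to the subgroup generated by `T` and `x`. -/
theorem omega_mem_closure_of_diagonal_order_div_three
    (x : Matrix.SpecialLinearGroup (Fin 3) ℂ)
    (hdiag : ∀ i j, i ≠ j → (x : Matrix (Fin 3) (Fin 3) ℂ) i j = 0)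
    (hfin : 0 < orderOf x) (hdvd : 3 ∣ orderOf x) :
    ω3SL ∈ Subgroup.closure {T3, x} := by
  obtain ⟨m, hm⟩ := hdvd
  have hm0 : 0 < m := by omega
  -- x is diagonal
  set d : Fin 3 → ℂ := fun i => (x : Matrix (Fin 3) (Fin 3) ℂ) i i with hd
  have hx : (x : Matrix (Fin 3) (Fin 3) ℂ) = Matrix.diagonal d := by
    ext i j
    by_cases h : i = j
    · subst h; simp [Matrix.diagonal, hd]
    · simp [Matrix.diagonal, h, hdiag i j h]
  set z : Matrix.SpecialLinearGroup (Fin 3) ℂ := x ^ m with hzdef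
  have hz3 : z ^ 3 = 1 := by
    rw [hzdef, ← pow_mul, mul_comm, ← hm, pow_orderOf_eq_one]
  have hzne : z ≠ 1 := by
    intro h
    have : orderOf x ∣ m := orderOf_dvd_of_pow_eq_one h
    have := Nat.le_of_dvd hm0 this
    omega
  have hzmat : (z : Matrix (Fin 3) (Fin 3) ℂ) = Matrix.diagonal (fun i => d i ^ m) := by
    rw [hzdef, Matrix.SpecialLinearGroup.coe_pow, hx, Matrix.diagonal_pow]
    rfl
  set a := d 0 ^ m with ha
  set b := d 1 ^ m with hb
  set c := d 2 ^ m with hc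
  have hz3mat : (Matrix.diagonal (fun i => d i ^ m)) ^ 3 = (1 : Matrix (Fin 3) (Fin 3) ℂ) := by
    rw [← hzmat, ← Matrix.SpecialLinearGroup.coe_pow, hz3]
    rfl
  rw [Matrix.diagonal_pow] at hz3mat
  have ha3 : a ^ 3 = 1 := by
    have := congrFun (congrFun hz3mat 0) 0
    simpa [Matrix.diagonal, Matrix.one_apply] using this
  have hb3 : b ^ 3 = 1 := by
    have := congrFun (congrFun hz3mat 1) 1
    simpa [Matrix.diagonal, Matrix.one_apply] using this
  have hc3 : c ^ 3 = 1 := by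
    have := congrFun (congrFun hz3mat 2) 2
    simpa [Matrix.diagonal, Matrix.one_apply] using this
  have habc : a * b * c = 1 := by
    have := z.2
    rw [hzmat, Matrix.det_diagonal, Fin.prod_univ_three] at this
    exact this
  -- membership facts
  have hT : T3 ∈ Subgroup.closure {T3, x} :=
    Subgroup.subset_closure (Set.mem_insert _ _)
  have hxmem : x ∈ Subgroup.closure {T3, x} :=
    Subgroup.subset_closure (Set.mem_insert_of_mem _ rfl)
  have hzmem : z ∈ Subgroup.closure {T3, x} := pow_mem hxmem m
  -- key ratios
  set u := a * b ^ 2 with hu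
  have hu3 : u ^ 3 = 1 := by
    have : u ^ 3 = a ^ 3 * (b ^ 3) ^ 2 := by rw [hu]; ring
    rw [this, ha3, hb3]; ring
  have hane : a ≠ 0 := by intro h; rw [h] at ha3; simp at ha3
  have hbne : b ≠ 0 := by intro h; rw [h] at hb3; simp at hb3
  have hcne : c ≠ 0 := by intro h; rw [h] at hc3; simp at hc3
  have hbc : b * c ^ 2 = u := by
    apply mul_left_cancel₀ hcne
    rw [hu]
    linear_combination b * hc3 - b * habc
  have hca : c * a ^ 2 = u := by
    apply mul_left_cancel₀ hbne
    rw [hu]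
    linear_combination a * habc - a * hb3
  set w : Matrix.SpecialLinearGroup (Fin 3) ℂ := z * T3 * z * z * T3 * T3 with hwdef
  have hwmem : w ∈ Subgroup.closure {T3, x} := by
    exact mul_mem (mul_mem (mul_mem (mul_mem (mul_mem hzmem hT) hzmem) hzmem) hT) hT
  have hwmat : (w : Matrix (Fin 3) (Fin 3) ℂ) = u • (1 : Matrix (Fin 3) (Fin 3) ℂ) := by
    have hcoe : (w : Matrix (Fin 3) (Fin 3) ℂ) =
        (z : Matrix (Fin 3) (Fin 3) ℂ) * T3 * z * z * T3 * T3 := by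
      rw [hwdef]; simp [Matrix.SpecialLinearGroup.coe_mul]
    have hdz : (fun i => d i ^ m) = ![a, b, c] := by
      funext i
      fin_cases i <;> simp [← ha, ← hb, ← hc]
    rw [hcoe, hzmat, hdz]
    exact key_mat a b c u hu.symm hbc hca
  rcases cube_roots hu3 with hu1 | huω | huω2
  · -- u = 1 : z is scalar
    have hab : a = b := by
      have : a = a * b ^ 3 := by rw [hb3]; ring
      rw [this]; linear_combination b * (hu ▸ hu1 : a * b ^ 2 = 1)
    have hbceq : b = c := by
      have : b = b * c ^ 3 := by rw [hc3]; ring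
      rw [this]; linear_combination c * (hbc.trans hu1)
    have hzsc : (z : Matrix (Fin 3) (Fin 3) ℂ) = a • (1 : Matrix (Fin 3) (Fin 3) ℂ) := by
      rw [hzmat]
      ext i j
      fin_cases i <;> fin_cases j <;>
        simp [Matrix.diagonal, Matrix.one_apply, ← ha, ← hb, ← hc, hab, hbceq]
    have hane1 : a ≠ 1 := by
      intro h
      apply hzne
      apply Subtype.ext
      rw [hzsc, h, one_smul]
      rfl
    rcases cube_roots ha3 with h1 | hω | hω2
    · exact absurd h1 hane1
    · have : ω3SL = z := by
        apply Subtype.ext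
        rw [hzsc, hω]; rfl
      rw [this]; exact hzmem
    · have : ω3SL = z * z := by
        apply Subtype.ext
        show ω3 • (1 : Matrix (Fin 3) (Fin 3) ℂ) =
          (z : Matrix (Fin 3) (Fin 3) ℂ) * (z : Matrix (Fin 3) (Fin 3) ℂ)
        rw [hzsc, hω2, smul_mul_assoc, mul_smul_comm, smul_smul, one_mul]
        congr 1
        linear_combination (-ω3) * ω3_pow_three
      rw [this]; exact mul_mem hzmem hzmem
  · have : ω3SL = w := by
      apply Subtype.ext
      show ω3 • (1 : Matrix (Fin 3) (Fin 3) ℂ) = _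
      rw [hwmat, huω]
    rw [this]; exact hwmem
  · have : ω3SL = w * w := by
      apply Subtype.ext
      show ω3 • (1 : Matrix (Fin 3) (Fin 3) ℂ) =
        (w : Matrix (Fin 3) (Fin 3) ℂ) * (w : Matrix (Fin 3) (Fin 3) ℂ)
      rw [hwmat, huω2, smul_mul_assoc, mul_smul_comm, smul_smul, one_mul]
      congr 1
      linear_combination (-ω3) * ω3_pow_three
    rw [this]; exact mul_mem hwmem hwmem
end
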